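/- Suppose the free cumulant series is quadratic and the two-state free cumulant series is simple quadratic: r₁ = b, r₂ = β, rₖ = 0 for k ≥ 3, and s₂ = 1, sₖ = 0 for k ≠ 2 (b, β ∈ ℂ). Then the c-free Appell polynomials are orthogonal with respect to φ: φ(Aₙ·Aₘ) = 0 for all n ≠ m, and moreover φ(Aₙ²) = β^{n−1} for all n ≥ 1. -/

import Mathlib

/-!
Put `u = w(1 + M)`. For quadratic `R` the equation for `M` becomes `u = w(1 + r₁u + r₂u²)`,
and `S(z) = z²` gives `η = wu`, so `F = (1 - η)⁻¹` solves `F = 1 + wuF`. Encode `φ` by the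
series `T_p(w) = Σₖ φ(xᵏp)wᵏ`; multiplication by `x` becomes `w·T_{xp} = T_p - φ(p)`. For
these cumulants the Appell polynomials obey the three-term recurrence
`A_{n+2} = (x - r₁)A_{n+1} - r₂A_n` (with `s₂ = 1` in place of `r₂` for `n = 0`), and the
equation for `u` propagates `T_{A_{n+1}} = r₂ⁿ u^{n+1} F` along it. As
`u^{n+1}F = w^{n+1}(1 + O(w))`, `φ(xᵏA_{n+1})` vanishes for `k ≤ n` and equals `r₂ⁿ` for
`k = n + 1`; since `A_m` is monic of degree `m`, this is orthogonality with the stated norms.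
-/

/-- The one-variable c-free Appell polynomials: `A₀ = 1` and
`Aₙ₊₁ = x·Aₙ − Σ_{j=1}^{n} rⱼ·A_{n+1−j} − s_{n+1}·1`. -/
noncomputable def cfAppell (r s : ℕ → ℂ) : ℕ → Polynomial ℂ
  | 0 => 1
  | n + 1 =>
      Polynomial.X * cfAppell r s n
        - ∑ j ∈ Finset.range n, Polynomial.C (r (j + 1)) * cfAppell r s (n - j)
        - Polynomial.C (s (n + 1))
  termination_by n => n
  decreasing_by all_goals omega

/-- Substitution `Σ_{k≥1} rₖ·gᵏ` of a power series `g` with zero constant term into the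
series `R(z) = Σ_{k≥1} rₖ zᵏ`, computed coefficientwise (for such `g`, the coefficient
of `wⁿ` in `Σ_{k≥1} rₖ gᵏ` is the finite sum `Σ_{k=1}^{n} rₖ·(coeff of wⁿ in gᵏ)`). -/
noncomputable def substSeries (r : ℕ → ℂ) (g : PowerSeries ℂ) : PowerSeries ℂ :=
  PowerSeries.mk fun n => ∑ k ∈ Finset.Icc 1 n, r k * PowerSeries.coeff (R := ℂ) n (g ^ k)

open Finset

section Orthogonality

open Polynomial

variable {R : Type*} [CommRing R] (φ : R[X] →ₗ[R] R)

lemma apply_mul_of_natDegree_le {p q : R[X]} {n : ℕ} (hp : p.natDegree ≤ n)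
    (hq : ∀ k < n, φ (X ^ k * q) = 0) : φ (p * q) = p.coeff n * φ (X ^ n * q) := by
  have hsum : p * q = ∑ k ∈ range (n + 1), p.coeff k • (X ^ k * q) := by
    conv_lhs => rw [p.as_sum_range' (n + 1) (Nat.lt_succ_of_le hp), sum_mul]
    refine sum_congr rfl fun k _ => ?_
    rw [← C_mul_X_pow_eq_monomial, smul_eq_C_mul]
    ring
  rw [hsum, map_sum, sum_range_succ, sum_eq_zero fun k hk => ?_, zero_add, map_smul,
    smul_eq_mul]
  rw [map_smul, hq k (mem_range.1 hk), smul_zero]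

lemma orthogonal_of_apply_X_pow_mul_eq_zero (A : ℕ → R[X]) (hdeg : ∀ n, (A n).natDegree ≤ n)
    (hlead : ∀ n, (A n).coeff n = 1) (hφ : ∀ n, ∀ k < n, φ (X ^ k * A n) = 0) :
    (∀ n m, n ≠ m → φ (A n * A m) = 0) ∧ ∀ n, φ (A n * A n) = φ (X ^ n * A n) := by
  have key : ∀ m n, m ≤ n → φ (A m * A n) = (A m).coeff n * φ (X ^ n * A n) :=
    fun m n h => apply_mul_of_natDegree_le φ ((hdeg m).trans h) (hφ n)
  refine ⟨fun n m hnm => ?_, fun n => by rw [key n n le_rfl, hlead, one_mul]⟩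
  rcases hnm.lt_or_gt with h | h
  · rw [key n m h.le, coeff_eq_zero_of_natDegree_lt ((hdeg n).trans_lt h), zero_mul]
  · rw [mul_comm, key m n h.le, coeff_eq_zero_of_natDegree_lt ((hdeg m).trans_lt h), zero_mul]

end Orthogonality

section CfAppell

open Polynomial

variable (r s : ℕ → ℂ)

lemma cfAppell_zero : cfAppell r s 0 = 1 := by
  rw [cfAppell]

lemma cfAppell_succ (n : ℕ) :
    cfAppell r s (n + 1) = X * cfAppell r s n
      - ∑ j ∈ range n, C (r (j + 1)) * cfAppell r s (n - j) - C (s (n + 1)) := by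
  rw [cfAppell]

lemma cfAppell_natDegree_le (n : ℕ) : (cfAppell r s n).natDegree ≤ n := by
  induction n using Nat.strong_induction_on with
  | _ n ih =>
    cases n with
    | zero => simp [cfAppell_zero]
    | succ n =>
      have hsum : (∑ j ∈ range n, C (r (j + 1)) * cfAppell r s (n - j)).natDegree ≤ n + 1 :=
        natDegree_sum_le_of_forall_le _ _ fun j hj =>
          (natDegree_C_mul_le _ _).trans ((ih (n - j) (by omega)).trans (by omega))
      have hX : (X * cfAppell r s n).natDegree ≤ n + 1 :=
        natDegree_mul_le.trans (by simpa [add_comm] using Nat.succ_le_succ (ih n (by omega)))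
      rw [cfAppell_succ]
      exact (natDegree_sub_le_of_le (natDegree_sub_le_of_le hX hsum) (natDegree_C _).le).trans
        (by simp)

lemma cfAppell_coeff_self (n : ℕ) : (cfAppell r s n).coeff n = 1 := by
  cases n with
  | zero => simp [cfAppell_zero]
  | succ n =>
    have hsum : (∑ j ∈ range n, C (r (j + 1)) * cfAppell r s (n - j)).coeff (n + 1) = 0 :=
      coeff_eq_zero_of_natDegree_lt <| (natDegree_sum_le_of_forall_le _ _ fun j _ =>
        (natDegree_C_mul_le _ _).trans ((cfAppell_natDegree_le r s (n - j)).trans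
          (Nat.sub_le n j))).trans_lt (Nat.lt_succ_self n)
    rw [cfAppell_succ, coeff_sub, coeff_sub, coeff_X_mul, cfAppell_coeff_self n, hsum, coeff_C]
    simp

lemma cfAppell_one (hs1 : s 1 = 0) : cfAppell r s 1 = X * cfAppell r s 0 := by
  simp [cfAppell_succ, cfAppell_zero, hs1]

lemma cfAppell_two :
    cfAppell r s 2 = X * cfAppell r s 1 - C (r 1) * cfAppell r s 1
      - C (s 2) * cfAppell r s 0 := by
  rw [cfAppell_succ, sum_range_one, cfAppell_zero, mul_one]

lemma cfAppell_add_three (hr : ∀ k, 3 ≤ k → r k = 0) (n : ℕ) (hs : s (n + 3) = 0) :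
    cfAppell r s (n + 3) = X * cfAppell r s (n + 2) - C (r 1) * cfAppell r s (n + 2)
      - C (r 2) * cfAppell r s (n + 1) := by
  rw [cfAppell_succ, sum_range_succ', sum_range_succ',
    sum_eq_zero fun j _ => by rw [hr (j + 3) (by omega), C_0, zero_mul], hs, C_0]
  norm_num
  ring

end CfAppell

section MomentSeries

open PowerSeries

variable {R : Type*} [CommRing R] (φ : Polynomial R →ₗ[R] R)

noncomputable def momentSeries (p : Polynomial R) : R⟦X⟧ :=
  mk fun k => φ (Polynomial.X ^ k * p)

lemma coeff_momentSeries (p : Polynomial R) (k : ℕ) :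
    coeff k (momentSeries φ p) = φ (Polynomial.X ^ k * p) :=
  coeff_mk _ _

lemma constantCoeff_momentSeries (p : Polynomial R) :
    constantCoeff (momentSeries φ p) = φ p := by
  rw [← coeff_zero_eq_constantCoeff_apply, coeff_momentSeries, pow_zero, one_mul]

lemma momentSeries_sub (p q : Polynomial R) :
    momentSeries φ (p - q) = momentSeries φ p - momentSeries φ q := by
  ext k
  simp [coeff_momentSeries, mul_sub]

lemma momentSeries_C_mul (c : R) (p : Polynomial R) :
    momentSeries φ (Polynomial.C c * p) = C c * momentSeries φ p := by
  ext k
  rw [coeff_momentSeries, coeff_C_mul, coeff_momentSeries, mul_left_comm,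
    ← Polynomial.smul_eq_C_mul, map_smul, smul_eq_mul]

lemma X_mul_momentSeries_X_mul (p : Polynomial R) :
    X * momentSeries φ (Polynomial.X * p) = momentSeries φ p - C (φ p) := by
  ext k
  cases k with
  | zero => simp [constantCoeff_momentSeries]
  | succ k => simp [coeff_momentSeries, pow_succ, mul_assoc]

/-- `x - b` acts on `T_p` as `(1 - bw)/w` up to a constant, and `hu` says
`(1 - bw)u - w = βwu²`. -/
lemma momentSeries_three_term {u F : R⟦X⟧} {b β γ a a' : R} {p q : Polynomial R} {n : ℕ}
    (hu : u = X * (1 + C b * u + C β * u ^ 2))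
    (hp : momentSeries φ p = C a * (u ^ (n + 1) * F))
    (hq : momentSeries φ q = C a' * (u ^ n * F)) (ha : γ * a' = a) :
    momentSeries φ (Polynomial.X * p - Polynomial.C b * p - Polynomial.C γ * q)
      = C (β * a) * (u ^ (n + 2) * F) := by
  have hφp : φ p = 0 := by
    rw [← constantCoeff_momentSeries, hp, hu]
    simp
  apply X_mul_cancel
  rw [momentSeries_sub, momentSeries_sub, momentSeries_C_mul, momentSeries_C_mul, mul_sub,
    mul_sub, X_mul_momentSeries_X_mul, hp, hq, hφp, ← ha]
  simp only [map_mul, map_zero]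
  linear_combination (C γ * C a' * u ^ n * F) * hu

end MomentSeries

section SubstSeries

open PowerSeries

lemma coeff_X_mul_pow_mul_of_lt {R : Type*} [CommRing R] (G F : R⟦X⟧) {n k : ℕ}
    (hk : k < n) :
    coeff k ((X * G) ^ n * F) = 0 := by
  rw [mul_pow, mul_assoc, coeff_X_pow_mul', if_neg hk.not_ge]

lemma coeff_X_mul_pow_mul_self {R : Type*} [CommRing R] (G F : R⟦X⟧) (n : ℕ) :
    coeff n ((X * G) ^ n * F) = constantCoeff G ^ n * constantCoeff F := by
  rw [mul_pow, mul_assoc, coeff_X_pow_mul', if_pos le_rfl, Nat.sub_self,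
    coeff_zero_eq_constantCoeff_apply, map_mul, map_pow]

lemma constantCoeff_substSeries (r : ℕ → ℂ) (g : ℂ⟦X⟧) :
    constantCoeff (substSeries r g) = 0 := by
  rw [← coeff_zero_eq_constantCoeff_apply, substSeries, coeff_mk, Icc_eq_empty (by omega),
    sum_empty]

lemma substSeries_X_mul_eq_sum (r : ℕ → ℂ) {N : ℕ} (hr : ∀ k, N < k → r k = 0) (h : ℂ⟦X⟧) :
    substSeries r (X * h) = ∑ k ∈ Icc 1 N, C (r k) * (X * h) ^ k := by
  ext n
  simp only [substSeries, coeff_mk, map_sum, coeff_C_mul]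
  refine (sum_subset (Icc_subset_Icc_right (le_max_left n N)) fun k hk hkn => ?_).trans
    (sum_subset (Icc_subset_Icc_right (le_max_right n N)) fun k hk hkN => ?_).symm
  · have hnk : n < k := by simp only [mem_Icc] at hk hkn; omega
    rw [← mul_one ((X * h) ^ k), coeff_X_mul_pow_mul_of_lt h 1 hnk, mul_zero]
  · rw [hr k (by simp only [mem_Icc] at hk hkN; omega), zero_mul]

lemma substSeries_X_mul_of_quadratic (r : ℕ → ℂ) (hr : ∀ k, 3 ≤ k → r k = 0) (h : ℂ⟦X⟧) :
    substSeries r (X * h) = C (r 1) * (X * h) + C (r 2) * (X * h) ^ 2 := by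
  rw [substSeries_X_mul_eq_sum r (N := 2) fun k hk => hr k hk,
    sum_Icc_succ_top (by norm_num), Icc_self, sum_singleton, pow_one]

end SubstSeries

section CfAppellMoments

open PowerSeries

lemma momentSeries_cfAppell_succ (r s : ℕ → ℂ) (hr : ∀ k, 3 ≤ k → r k = 0) (hs2 : s 2 = 1)
    (hs : ∀ k, k ≠ 2 → s k = 0) (φ : Polynomial ℂ →ₗ[ℂ] ℂ) {u F : ℂ⟦X⟧}
    (hu : u = X * (1 + C (r 1) * u + C (r 2) * u ^ 2)) (hF : F = 1 + X * u * F)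
    (h1 : momentSeries φ 1 = F) (n : ℕ) :
    momentSeries φ (cfAppell r s (n + 1)) = C (r 2 ^ n) * (u ^ (n + 1) * F) := by
  have h0 : momentSeries φ (cfAppell r s 0) = C 1 * (u ^ 0 * F) := by
    simp [cfAppell_zero, h1]
  have hA1 : momentSeries φ (cfAppell r s 1) = C (r 2 ^ 0) * (u ^ 1 * F) := by
    have hφ1 : φ 1 = 1 := by
      rw [← constantCoeff_momentSeries, h1, hF]
      simp
    apply X_mul_cancel
    rw [cfAppell_one r s (hs 1 (by decide)), X_mul_momentSeries_X_mul, cfAppell_zero, h1, hφ1]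
    simp only [pow_zero, pow_one, map_one, one_mul]
    linear_combination hF
  suffices ∀ n, momentSeries φ (cfAppell r s (n + 1)) = C (r 2 ^ n) * (u ^ (n + 1) * F) ∧
      momentSeries φ (cfAppell r s (n + 2)) = C (r 2 ^ (n + 1)) * (u ^ (n + 2) * F) from
    (this n).1
  intro n
  induction n with
  | zero =>
    refine ⟨hA1, ?_⟩
    rw [cfAppell_two, ← mul_one (r 2), pow_one]
    exact momentSeries_three_term φ hu hA1 h0 (by rw [hs2, one_mul])
  | succ n ih =>
    refine ⟨ih.2, ?_⟩
    rw [cfAppell_add_three r s hr n (hs _ (by omega)), pow_succ']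
    exact momentSeries_three_term φ hu ih.2 ih.1 (pow_succ' _ _).symm

end CfAppellMoments

open PowerSeries in
theorem cfAppell_orthogonal_of_quadratic_cumulants_general (β : ℂ) (r s : ℕ → ℂ)
    (hr2 : r 2 = β) (hr : ∀ k, 3 ≤ k → r k = 0)
    (hs2 : s 2 = 1) (hs : ∀ k, k ≠ 2 → s k = 0)
    (M η : PowerSeries ℂ)
    (hM : M = substSeries r (PowerSeries.X * (1 + M)))
    (hη : η = (1 + M)⁻¹ * substSeries s (PowerSeries.X * (1 + M)))
    (φl : Polynomial ℂ →ₗ[ℂ] ℂ)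
    (hφ : ∀ m : ℕ, φl (Polynomial.X ^ m) = PowerSeries.coeff (R := ℂ) m (1 - η)⁻¹) :
    (∀ n m : ℕ, n ≠ m → φl (cfAppell r s n * cfAppell r s m) = 0) ∧
      (∀ n, 1 ≤ n → φl (cfAppell r s n * cfAppell r s n) = β ^ (n - 1)) := by
  subst hr2
  have hG : constantCoeff (1 + M) = 1 := by
    rw [map_add, hM, constantCoeff_substSeries, map_one, add_zero]
  have hu : X * (1 + M) = X * (1 + C (r 1) * (X * (1 + M)) + C (r 2) * (X * (1 + M)) ^ 2) := by
    rw [add_assoc, ← substSeries_X_mul_of_quadratic r hr, ← hM]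
  have hηu : η = X * (X * (1 + M)) := by
    rw [hη, substSeries_X_mul_of_quadratic s fun k hk => hs k (by omega), hs 1 (by decide),
      hs2, map_zero, map_one]
    linear_combination (X ^ 2 * (1 + M)) * PowerSeries.inv_mul_cancel _ (hG ▸ one_ne_zero)
  have hη0 : constantCoeff (1 - η) = 1 := by simp [hηu]
  have hF : (1 - η)⁻¹ = 1 + X * (X * (1 + M)) * (1 - η)⁻¹ := by
    linear_combination PowerSeries.inv_mul_cancel _ (hη0 ▸ one_ne_zero) + (1 - η)⁻¹ * hηu
  have h1 : momentSeries φl 1 = (1 - η)⁻¹ := by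
    ext k
    rw [coeff_momentSeries, mul_one, hφ]
  have hval : ∀ n k, φl (Polynomial.X ^ k * cfAppell r s (n + 1))
      = r 2 ^ n * coeff k ((X * (1 + M)) ^ (n + 1) * (1 - η)⁻¹) := fun n k => by
    rw [← coeff_momentSeries, momentSeries_cfAppell_succ r s hr hs2 hs φl hu hF h1, coeff_C_mul]
  obtain ⟨hortho, hdiag⟩ := orthogonal_of_apply_X_pow_mul_eq_zero φl (cfAppell r s)
    (cfAppell_natDegree_le r s) (cfAppell_coeff_self r s) fun n k hk => by
      obtain ⟨n, rfl⟩ := Nat.exists_eq_add_of_lt (Nat.zero_le k |>.trans_lt hk)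
      rw [hval, coeff_X_mul_pow_mul_of_lt _ _ (by omega), mul_zero]
  refine ⟨hortho, fun n hn => ?_⟩
  obtain ⟨n, rfl⟩ := Nat.exists_eq_add_of_le' hn
  rw [hdiag, hval, coeff_X_mul_pow_mul_self, hG, constantCoeff_inv, hη0]
  simp

/-- if the free cumulant series is quadratic (`r₁ = b`, `r₂ = β`, `rₖ = 0`
for `k ≥ 3`) and the two-state free cumulant series is simple quadratic (`s₂ = 1`,
`sₖ = 0` for `k ≠ 2`), then the c-free Appell polynomials are orthogonal with respect
to `φ`: `φ(Aₙ·Aₘ) = 0` for `n ≠ m`, and `φ(Aₙ²) = β^{n−1}` for `n ≥ 1`. -/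
theorem cfAppell_orthogonal_of_quadratic_cumulants (b β : ℂ) (r s : ℕ → ℂ)
    (hr1 : r 1 = b) (hr2 : r 2 = β) (hr : ∀ k, 3 ≤ k → r k = 0)
    (hs2 : s 2 = 1) (hs : ∀ k, k ≠ 2 → s k = 0)
    (M η : PowerSeries ℂ)
    (hM0 : PowerSeries.constantCoeff (R := ℂ) M = 0)
    (hM : M = substSeries r (PowerSeries.X * (1 + M)))
    (hη : η = (1 + M)⁻¹ * substSeries s (PowerSeries.X * (1 + M)))
    (φl : Polynomial ℂ →ₗ[ℂ] ℂ)
    (hφ : ∀ m : ℕ, φl (Polynomial.X ^ m) = PowerSeries.coeff (R := ℂ) m (1 - η)⁻¹) :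
    (∀ n m : ℕ, n ≠ m → φl (cfAppell r s n * cfAppell r s m) = 0) ∧
      (∀ n, 1 ≤ n → φl (cfAppell r s n * cfAppell r s n) = β ^ (n - 1)) :=
  cfAppell_orthogonal_of_quadratic_cumulants_general β r s hr2 hr hs2 hs M η hM hη φl hφ
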